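/- Assume Φ'_β is quasi-complete and let {μ_t}_{t≥0} be a continuous convolution semigroup of Radon probability measures on Φ'_β. Then for every T > 0 the family {μ_t : t ∈ [0,T]} is uniformly tight. -/

import Mathlib

/-
Fix a compact set `M` carrying almost all of `μ T`. Since `μ T = μ (T - s) ∗ μ s`, a first-moment
argument gives for each `s ≤ T` a shift `x s` such that `μ s` almost lives on `-x s + M`. Weak
continuity at `t` forces `x s - x t ∈ M - M + V` for `s` near `t`, so by compactness of `[0, T]`
the shifts form a totally bounded set; by quasi-completeness its closure `R` is compact, and
`M - R` is the required compact set.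
-/

open MeasureTheory ProbabilityTheory Complex Filter Set
open scoped ENNReal NNReal Topology

noncomputable section

variable {Φ : Type*} [AddCommGroup Φ] [Module ℝ Φ] [TopologicalSpace Φ]

/-- The projection `π_{φ₁,…,φₙ} : Φ' → ℝⁿ`, `f ↦ (f[φ₁],…,f[φₙ])`. -/
def cylProj {Φ : Type*} [AddCommGroup Φ] [Module ℝ Φ] [TopologicalSpace Φ]
    {n : ℕ} (φ : Fin n → Φ) : (Φ →L[ℝ] ℝ) → (Fin n → ℝ) :=
  fun f i => f (φ i)

/-- The collection of cylindrical subsets of `Φ'` based on `M ⊆ Φ`. -/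
def cylSets (M : Set Φ) : Set (Set (Φ →L[ℝ] ℝ)) :=
  {Z | ∃ (n : ℕ) (φ : Fin n → Φ), (∀ i, φ i ∈ M) ∧
    ∃ A : Set (Fin n → ℝ), MeasurableSet A ∧ Z = cylProj φ ⁻¹' A}

/-- A Radon measure: every Borel set can be inner approximated by compact sets. -/
def IsRadon {X : Type*} [TopologicalSpace X] [MeasurableSpace X] (μ : Measure X) : Prop :=
  ∀ A : Set X, MeasurableSet A → ∀ ε : ℝ≥0∞, 0 < ε →
    ∃ K, K ⊆ A ∧ IsCompact K ∧ μ (A \ K) < ε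

def conv' {G : Type*} [Add G] [MeasurableSpace G] (μ ν : Measure G) : Measure G :=
  Measure.map (fun p : G × G => p.1 + p.2) (μ.prod ν)

/-- `n`-fold convolution power, with the convention `μ^{∗0} = δ₀`. -/
def convPow {G : Type*} [AddMonoid G] [MeasurableSpace G] (μ : Measure G) : ℕ → Measure G
  | 0 => Measure.dirac 0
  | n + 1 => conv' (convPow μ n) μ

def IsHilbertian (p : Seminorm ℝ Φ) : Prop :=
  ∃ B : Φ →ₗ[ℝ] Φ →ₗ[ℝ] ℝ, (∀ x y, B x y = B y x) ∧ (∀ x, 0 ≤ B x x) ∧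
    ∀ x, p x = Real.sqrt (B x x)

/-- `e` is an orthonormal basis for the Hilbertian seminorm `q` with bilinear form `B`:
orthonormality together with density of the span in the `q`-topology. -/
def IsONBasisFor (q : Seminorm ℝ Φ) (B : Φ →ₗ[ℝ] Φ →ₗ[ℝ] ℝ) (e : ℕ → Φ) : Prop :=
  (∀ x y, B x y = B y x) ∧ (∀ x, q x = Real.sqrt (B x x)) ∧
  (∀ i j, B (e i) (e j) = if i = j then 1 else 0) ∧
  ∀ φ : Φ, ∀ ε : ℝ, 0 < ε → ∃ c : ℕ →₀ ℝ, q (φ - c.sum fun i a => a • e i) < ε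

/-- The canonical inclusion `i_{p,q} : Φ_q → Φ_p` (for `p ≤ q`) is Hilbert–Schmidt. -/
def IsHSPair (p q : Seminorm ℝ Φ) : Prop :=
  p ≤ q ∧ ∃ (B : Φ →ₗ[ℝ] Φ →ₗ[ℝ] ℝ) (e : ℕ → Φ),
    IsONBasisFor q B e ∧ Summable (fun n => (p (e n)) ^ 2)

def GeneratesTopology {ι : Type} [Nonempty ι] (P : SeminormFamily ℝ Φ ι) : Prop :=
  WithSeminorms P

/-- A nuclear space: the topology is generated by a family of Hilbertian seminorms such that
each member is dominated by another member with Hilbert–Schmidt canonical inclusion. -/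
class IsNuclearSpace (Φ : Type*) [AddCommGroup Φ] [Module ℝ Φ] [TopologicalSpace Φ] : Prop where
  out : ∃ (ι : Type) (hne : Nonempty ι) (P : SeminormFamily ℝ Φ ι),
    @GeneratesTopology Φ _ _ _ ι hne P ∧
    (∀ i, IsHilbertian (P i)) ∧ ∀ i, ∃ j, IsHSPair (P i) (P j)

variable [MeasurableSpace (Φ →L[ℝ] ℝ)]

def charFun' (μ : Measure (Φ →L[ℝ] ℝ)) (φ : Φ) : ℂ :=
  ∫ f, Complex.exp (Complex.I * (f φ : ℂ)) ∂μ

/-- Dual "norm" `p'(f) = sup {|f[φ]| : p(φ) ≤ 1}`, with values in `ℝ≥0∞`. -/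
def dualNorm (p : Seminorm ℝ Φ) (f : Φ →L[ℝ] ℝ) : ℝ≥0∞ :=
  ⨆ φ ∈ {ψ : Φ | p ψ ≤ 1}, ENNReal.ofReal |f φ|

/-- The unit ball `B_{p'}(1)` of the dual norm. -/
def dualBall (p : Seminorm ℝ Φ) : Set (Φ →L[ℝ] ℝ) :=
  {f | dualNorm p f ≤ 1}

structure IsLevyProcess {Ω : Type*} [MeasurableSpace Ω]
    (P : Measure Ω) (L : ℝ → Ω → (Φ →L[ℝ] ℝ)) : Prop where
  measurable : ∀ t : ℝ, Measurable (L t)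
  init : ∀ᵐ ω ∂P, L 0 ω = 0
  indepIncrements : ∀ (n : ℕ) (t : Fin (n + 1) → ℝ), Monotone t → 0 ≤ t 0 →
    iIndepFun (m := fun _ => inferInstance) (fun i : Fin (n + 1) => fun ω =>
      if i = 0 then L (t 0) ω else L (t i) ω - L (t (i - 1)) ω) P
  stationary : ∀ s t : ℝ, 0 ≤ s → s ≤ t →
    P.map (fun ω => L t ω - L s ω) = P.map (L (t - s))
  radon : ∀ t : ℝ, 0 ≤ t → IsRadon (P.map (L t))
  weakCont : ∀ g : BoundedContinuousFunction (Φ →L[ℝ] ℝ) ℝ,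
    Tendsto (fun t => ∫ f, g f ∂(P.map (L t))) (nhdsWithin 0 (Set.Ici 0)) (nhds (g 0))

open scoped Pointwise BoundedContinuousFunction

theorem IsCompact.sub {G : Type*} [TopologicalSpace G] [Sub G] [ContinuousSub G]
    {s t : Set G} (hs : IsCompact s) (ht : IsCompact t) : IsCompact (s - t) := by
  rw [← image2_sub, ← image_prod]
  exact (hs.prod ht).image continuous_sub

theorem CompletelyRegularSpace.exists_continuous_zero_one_of_isCompact' {X : Type*}
    [TopologicalSpace X] [CompletelyRegularSpace X] {s t : Set X} (hs : IsCompact s)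
    (ht : IsClosed t) (hd : Disjoint s t) :
    ∃ f : C(X, ℝ), EqOn f 0 t ∧ EqOn f 1 s ∧ ∀ x, f x ∈ Icc (0 : ℝ) 1 := by
  choose! g hg hg0 hg1 using fun x (hx : x ∈ s) =>
    CompletelyRegularSpace.completely_regular x t ht (disjoint_left.1 hd hx)
  obtain ⟨F, hFs, hsF⟩ := hs.elim_nhds_subcover (fun c => {y | (g c y : ℝ) < 1 / 2})
    fun c hc => (isOpen_lt (continuous_subtype_val.comp (hg c hc)) continuous_const).mem_nhds
      (by simp [hg0 c hc])
  -- on `s` some summand `1 - g c` exceeds `1 / 2`, on `t` all of them vanish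
  let sum : X → ℝ := fun y => ∑ c ∈ F, (1 - (g c y : ℝ))
  have hsum_nonneg : ∀ y, 0 ≤ sum y := fun y =>
    Finset.sum_nonneg fun c _ => sub_nonneg.2 (g c y).2.2
  refine ⟨⟨fun y => min 1 (2 * sum y), continuous_const.min (continuous_const.mul
    (continuous_finsetSum _ fun c hc => continuous_const.sub
      (continuous_subtype_val.comp (hg c (hFs c hc)))))⟩, fun y hy => ?_, fun y hy => ?_,
    fun y => ⟨le_min zero_le_one (by linarith [hsum_nonneg y]), min_le_left _ _⟩⟩
  · have : sum y = 0 := Finset.sum_eq_zero fun c hc => by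
      simp [hg1 c (hFs c hc) hy]
    simp [this]
  · obtain ⟨c, hcF, hc⟩ := mem_iUnion₂.1 (hsF hy)
    have hc' : (g c y : ℝ) < 1 / 2 := hc
    have : 1 - (g c y : ℝ) ≤ sum y := Finset.single_le_sum
      (f := fun c => 1 - (g c y : ℝ)) (fun c _ => sub_nonneg.2 (g c y).2.2) hcF
    simp only [ContinuousMap.coe_mk, Pi.one_apply]
    exact min_eq_left (by linarith)

theorem MeasureTheory.nonempty_inter_of_measure_compl_add_lt {α : Type*} [MeasurableSpace α]
    (μ : Measure α) {s t : Set α} (h : μ sᶜ + μ tᶜ < μ univ) : (s ∩ t).Nonempty := by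
  rw [nonempty_iff_ne_empty]
  intro hst
  refine h.not_ge ((measure_mono fun x _ => ?_).trans (measure_union_le sᶜ tᶜ))
  by_contra hx
  simp only [mem_union, mem_compl_iff, not_or, not_not] at hx
  exact hst.subset ⟨hx.1, hx.2⟩

theorem exists_measure_preimage_add_le_of_conv_eq {X : Type*} [Add X] [MeasurableSpace X]
    {μ ν κ : Measure X} [IsProbabilityMeasure μ] [SFinite ν] [NeZero κ] (h : conv' μ ν = κ)
    {M : Set X} (hM : MeasurableSet M) : ∃ x, ν ((x + ·) ⁻¹' M) ≤ κ M := by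
  have hadd : AEMeasurable (fun p : X × X => p.1 + p.2) (μ.prod ν) := by
    by_contra hadd
    exact NeZero.ne κ (h ▸ Measure.map_of_not_aemeasurable hadd)
  have hS : MeasurableSet (hadd.mk _ ⁻¹' M) := hadd.measurable_mk hM
  -- `+` need not be measurable for the product σ-algebra; a.e. it agrees with `hadd.mk`
  have hslice : (fun x => ν (Prod.mk x ⁻¹' (hadd.mk _ ⁻¹' M))) =ᵐ[μ]
      fun x => ν ((x + ·) ⁻¹' M) := by
    filter_upwards [Measure.ae_ae_of_ae_prod hadd.ae_eq_mk] with x hx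
    refine measure_congr ?_
    filter_upwards [hx] with y hy
    change (hadd.mk _ (x, y) ∈ M) = (x + y ∈ M)
    rw [hy]
  have hκ : κ M = ∫⁻ x, ν ((x + ·) ⁻¹' M) ∂μ := by
    rw [← h, conv', Measure.map_congr hadd.ae_eq_mk, Measure.map_apply hadd.measurable_mk hM,
      Measure.prod_apply hS, lintegral_congr_ae hslice]
  rw [hκ]
  exact exists_le_lintegral ((measurable_measure_prodMk_left hS).aemeasurable.congr hslice)

theorem eventually_measure_compl_lt_of_forall_tendsto_integral {X ι : Type*}
    [TopologicalSpace X] [CompletelyRegularSpace X] [MeasurableSpace X] [OpensMeasurableSpace X]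
    {l : Filter ι} {ν : ι → Measure X} {ν₀ : Measure X} [IsProbabilityMeasure ν₀]
    (hprob : ∀ᶠ i in l, IsProbabilityMeasure (ν i))
    (hν : ∀ g : X →ᵇ ℝ, Tendsto (fun i => ∫ x, g x ∂ν i) l (𝓝 (∫ x, g x ∂ν₀)))
    {C U : Set X} (hC : IsCompact C) (hU : IsOpen U) (hCU : C ⊆ U) {η : ℝ≥0∞}
    (hη : ν₀ Cᶜ < η) : ∀ᶠ i in l, ν i Uᶜ < η := by
  rcases eq_or_ne η ∞ with rfl | hη_top
  · exact hprob.mono fun i _ => measure_lt_top _ _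
  obtain ⟨g, hgU, hgC, hg01⟩ := CompletelyRegularSpace.exists_continuous_zero_one_of_isCompact'
    hC hU.isClosed_compl (disjoint_compl_right_iff_subset.2 hCU)
  let G : X →ᵇ ℝ := .mkOfBound g 1 fun x y => Real.dist_le_of_mem_Icc_01 (hg01 x) (hg01 y)
  let E := {x | g x = 1}
  let B := {x | g x ≠ 0}
  have hE : MeasurableSet E := (isClosed_eq g.continuous continuous_const).measurableSet
  have hB : MeasurableSet B := (isOpen_ne_fun g.continuous continuous_const).measurableSet
  have hE_le_integral : ∀ ρ : Measure X, [IsFiniteMeasure ρ] → ρ.real E ≤ ∫ x, G x ∂ρ := fun ρ _ => by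
    rw [← integral_indicator_one hE]
    refine integral_mono ((integrable_const (1 : ℝ)).indicator hE) (G.integrable ρ) fun x => ?_
    by_cases hx : x ∈ E
    · simp [indicator_of_mem hx, G, show g x = 1 from hx]
    · simpa [indicator_of_notMem hx, G] using (hg01 x).1
  have hintegral_le_B : ∀ ρ : Measure X, [IsFiniteMeasure ρ] → ∫ x, G x ∂ρ ≤ ρ.real B := fun ρ _ => by
    rw [← integral_indicator_one hB]
    refine integral_mono (G.integrable ρ) ((integrable_const (1 : ℝ)).indicator hB) fun x => ?_
    by_cases hx : x ∈ B
    · simpa [indicator_of_mem hx, G] using (hg01 x).2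
    · simp [indicator_of_notMem hx, G, show g x = 0 by simpa [B] using hx]
  have hν₀ : 1 - η.toReal < ∫ x, G x ∂ν₀ := by
    have : ν₀.real Eᶜ < η.toReal :=
      ENNReal.toReal_strict_mono hη_top ((measure_mono (compl_subset_compl.2 hgC)).trans_lt hη)
    linarith [hE_le_integral ν₀, probReal_compl_eq_one_sub (μ := ν₀) hE]
  filter_upwards [hprob, (hν G).eventually (eventually_gt_nhds hν₀)] with i _ hi
  have hBc : (ν i).real Bᶜ < η.toReal := by
    linarith [hintegral_le_B (ν i), probReal_compl_eq_one_sub (μ := ν i) hB]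
  refine (measure_mono fun x hx => ?_).trans_lt
    ((ENNReal.toReal_lt_toReal (measure_ne_top _ _) hη_top).1 hBc)
  simpa [B] using hgU hx

theorem eventually_sub_mem_sub_add_of_forall_tendsto_integral {X ι : Type*} [AddCommGroup X]
    [TopologicalSpace X] [IsTopologicalAddGroup X] [CompletelyRegularSpace X]
    [MeasurableSpace X] [OpensMeasurableSpace X]
    {l : Filter ι} {ν : ι → Measure X} {ν₀ : Measure X} [IsProbabilityMeasure ν₀]
    (hprob : ∀ᶠ i in l, IsProbabilityMeasure (ν i))
    (hν : ∀ g : X →ᵇ ℝ, Tendsto (fun i => ∫ x, g x ∂ν i) l (𝓝 (∫ x, g x ∂ν₀)))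
    {M : Set X} (hM : IsCompact M) {η : ℝ≥0∞} (hη : η + η ≤ 1) {x : ι → X} {x₀ : X}
    (hx : ∀ᶠ i in l, ν i ((x i + ·) ⁻¹' M)ᶜ < η) (hx₀ : ν₀ ((x₀ + ·) ⁻¹' M)ᶜ < η)
    {V : Set X} (hV : V ∈ 𝓝 0) : ∀ᶠ i in l, x i - x₀ ∈ M - M + V := by
  set W := interior (-V)
  have hW : IsOpen W := isOpen_interior
  have hW0 : (0 : X) ∈ W := mem_interior_iff_mem_nhds.2 (neg_mem_nhds_zero X hV)
  have hC : IsCompact ((x₀ + ·) ⁻¹' M) := (Homeomorph.addLeft x₀).isCompact_preimage.2 hM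
  have hCW := eventually_measure_compl_lt_of_forall_tendsto_integral hprob hν hC
    (hW.add_left (s := (x₀ + ·) ⁻¹' M)) (fun y hy => ⟨y, hy, 0, hW0, add_zero y⟩) hx₀
  filter_upwards [hprob, hx, hCW] with i _ hxi hCWi
  -- `x i - x₀ = (x i + z) - (x₀ + c) - w` with both brackets in `M`
  obtain ⟨z, hz, c, hc, w, hw, rfl⟩ := nonempty_inter_of_measure_compl_add_lt (ν i)
    ((ENNReal.add_lt_add hxi hCWi).trans_le (hη.trans_eq measure_univ.symm))
  refine ⟨x i + (c + w) - (x₀ + c), ⟨x i + (c + w), hz, x₀ + c, hc, rfl⟩, -w,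
    by simpa using interior_subset hw, by dsimp only; abel⟩

theorem totallyBounded_image_of_eventually_sub_mem_add {Y X : Type*} [TopologicalSpace Y]
    [AddCommGroup X] [UniformSpace X] [IsUniformAddGroup X] {S : Set Y} (hS : IsCompact S)
    {x : Y → X} {D : Set X} (hD : IsCompact D)
    (h : ∀ V ∈ 𝓝 (0 : X), ∀ t ∈ S, ∀ᶠ s in 𝓝[S] t, x s - x t ∈ D + V) :
    TotallyBounded (x '' S) := by
  rw [totallyBounded_iff_subset_finite_iUnion_nhds_zero]
  intro U hU
  obtain ⟨V, hV, hVU⟩ := exists_nhds_zero_half hU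
  obtain ⟨F, -, hSF⟩ := hS.elim_nhdsWithin_subcover (fun t => {s | x s - x t ∈ D + V})
    fun t ht => h V hV t ht
  have hQ : IsCompact (x '' F + D) := ((F.finite_toSet.image x).isCompact).add hD
  obtain ⟨G, hG, hQG⟩ := totallyBounded_iff_subset_finite_iUnion_nhds_zero.1 hQ.totallyBounded V hV
  refine ⟨G, hG, ?_⟩
  rintro _ ⟨s, hs, rfl⟩
  obtain ⟨t, htF, d, hd, v, hv, hst⟩ := mem_iUnion₂.1 (hSF hs)
  obtain ⟨y, hyG, w, hw, hyw⟩ := mem_iUnion₂.1 (hQG ⟨x t, ⟨t, htF, rfl⟩, d, hd, rfl⟩)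
  refine mem_iUnion₂.2 ⟨y, hyG, w + v, hVU w hw v hv, ?_⟩
  dsimp only [vadd_eq_add] at hyw hst ⊢
  rw [← add_assoc, hyw, add_assoc, hst, add_sub_cancel]

theorem isCompact_closure_of_totallyBounded {E : Type*} [AddCommGroup E] [Module ℝ E]
    [UniformSpace E] [IsUniformAddGroup E] [ContinuousSMul ℝ E]
    (hqc : ∀ s : Set E, Bornology.IsVonNBounded ℝ s → IsClosed s → IsComplete s) {s : Set E}
    (hs : TotallyBounded s) : IsCompact (closure s) :=
  isCompact_iff_totallyBounded_isComplete.2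
    ⟨hs.closure, hqc _ (hs.closure.isVonNBounded ℝ) isClosed_closure⟩

theorem statement19_general [BorelSpace (Φ →L[ℝ] ℝ)]
    -- `Φ'_β` is quasi-complete: bounded closed subsets are complete
    (hqc : ∀ s : Set (Φ →L[ℝ] ℝ), Bornology.IsVonNBounded ℝ s → IsClosed s →
      IsComplete s)
    (μ : ℝ → Measure (Φ →L[ℝ] ℝ))
    (hprob : ∀ t : ℝ, 0 ≤ t → IsProbabilityMeasure (μ t))
    (hradon : ∀ t : ℝ, 0 ≤ t → IsRadon (μ t))
    (hsg : ∀ s t : ℝ, 0 ≤ s → 0 ≤ t → conv' (μ s) (μ t) = μ (s + t))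
    (hcont : ∀ t : ℝ, 0 ≤ t → ∀ g : BoundedContinuousFunction (Φ →L[ℝ] ℝ) ℝ,
      Tendsto (fun s => ∫ f, g f ∂(μ s)) (nhdsWithin t (Set.Ici 0))
        (nhds (∫ f, g f ∂(μ t)))) :
    ∀ T : ℝ, 0 < T → ∀ ε : ℝ≥0∞, 0 < ε →
      ∃ K : Set (Φ →L[ℝ] ℝ), IsCompact K ∧ ∀ t ∈ Set.Icc (0:ℝ) T, μ t Kᶜ < ε := by
  intro T hT ε hε
  set η := min ε 2⁻¹
  have hηη : η + η ≤ 1 :=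
    (add_le_add (min_le_right _ _) (min_le_right _ _)).trans_eq ENNReal.inv_two_add_inv_two
  have := hprob T hT.le
  obtain ⟨K₀, -, hK₀, hK₀T⟩ := hradon T hT.le univ .univ η (lt_min hε (by norm_num))
  have hM : IsCompact (closure K₀) := hK₀.closure
  have hMT : μ T (closure K₀)ᶜ < η := (measure_mono (compl_subset_compl.2 subset_closure)).trans_lt
    (by rwa [← compl_eq_univ_sdiff] at hK₀T)
  have hx : ∀ s ∈ Icc 0 T, ∃ x, μ s ((x + ·) ⁻¹' closure K₀)ᶜ < η := fun s hs => by
    have := hprob (T - s) (by linarith [hs.2])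
    have := hprob s hs.1
    obtain ⟨x, hx⟩ := exists_measure_preimage_add_le_of_conv_eq
      ((hsg (T - s) s (by linarith [hs.2]) hs.1).trans (congrArg μ (sub_add_cancel T s)))
      isClosed_closure.measurableSet.compl
    exact ⟨x, hx.trans_lt hMT⟩
  choose! x hx using hx
  have hR : IsCompact (closure (x '' Icc 0 T)) := isCompact_closure_of_totallyBounded hqc <|
    totallyBounded_image_of_eventually_sub_mem_add isCompact_Icc (hM.sub hM) fun V hV t ht => by
      have := hprob t ht.1
      exact eventually_sub_mem_sub_add_of_forall_tendsto_integral
        (eventually_nhdsWithin_of_forall fun s hs => hprob s hs.1)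
        (fun g => (hcont t ht.1 g).mono_left (nhdsWithin_mono _ Icc_subset_Ici_self))
        hM hηη (eventually_nhdsWithin_of_forall hx) (hx t ht) hV
  refine ⟨closure K₀ - closure (x '' Icc 0 T), hM.sub hR, fun t ht => ?_⟩
  refine (measure_mono (compl_subset_compl.2 fun y hy => ?_)).trans_lt
    ((hx t ht).trans_le (min_le_left _ _))
  exact ⟨x t + y, hy, x t, subset_closure ⟨t, ht, rfl⟩, add_sub_cancel_left _ _⟩

/-- if `Φ'_β` is quasi-complete, every continuous convolution semigroup of
Radon probability measures on `Φ'_β` is uniformly tight on compact time intervals. -/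
theorem statement19 [BorelSpace (Φ →L[ℝ] ℝ)]
    -- `Φ'_β` is quasi-complete: bounded closed subsets are complete
    (hqc : ∀ s : Set (Φ →L[ℝ] ℝ), Bornology.IsVonNBounded ℝ s → IsClosed s →
      IsComplete s)
    (μ : ℝ → Measure (Φ →L[ℝ] ℝ))
    (hprob : ∀ t : ℝ, 0 ≤ t → IsProbabilityMeasure (μ t))
    (hradon : ∀ t : ℝ, 0 ≤ t → IsRadon (μ t))
    (hsg : ∀ s t : ℝ, 0 ≤ s → 0 ≤ t → conv' (μ s) (μ t) = μ (s + t))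
    (h0 : μ 0 = Measure.dirac 0)
    (hcont : ∀ t : ℝ, 0 ≤ t → ∀ g : BoundedContinuousFunction (Φ →L[ℝ] ℝ) ℝ,
      Tendsto (fun s => ∫ f, g f ∂(μ s)) (nhdsWithin t (Set.Ici 0))
        (nhds (∫ f, g f ∂(μ t)))) :
    ∀ T : ℝ, 0 < T → ∀ ε : ℝ≥0∞, 0 < ε →
      ∃ K : Set (Φ →L[ℝ] ℝ), IsCompact K ∧ ∀ t ∈ Set.Icc (0:ℝ) T, μ t Kᶜ < ε :=
  statement19_general hqc μ hprob hradon hsg hcont
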